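/- Case analysis underlying rule 1.8 (left, with the R-padding): fix a valuation v of the free variables and let W_v = {w | (v,w) in the finite x-generator}, containing all ȳ-valuations where ψ's grounding is not ⊤. If W_v is empty, then ⊤ is a grounding of ∀ ȳ ψ at v; if W_v is nonempty, the ⊓-fold of the groundings of ψ over W_v is a grounding of ∀ ȳ ψ at v. Combining: the ⊓-fold over W_v (with empty fold = ⊤) is always a grounding of ∀ ȳ ψ at v. -/

import Mathlib

theorem forall_iff_forall_mem_of_forall_notMem {α : Type*} {p : α → Prop} {s : Set α}
    (h : ∀ a ∉ s, p a) : (∀ a, p a) ↔ ∀ a ∈ s, p a :=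
  ⟨fun hall a _ => hall a, fun hs a => by_cases (hs a) (h a)⟩

theorem forall_truth_iff_forall_mem_eval_grounding {Struct Term Vy : Type} {top : Term}
    {evalB : Term → Struct → Prop} {truthψ : Struct → Vy → Prop} {g : Vy → Term}
    {W : Finset Vy} {A : Struct} (htop : evalB top A) (hg : ∀ w, evalB (g w) A ↔ truthψ A w)
    (hW : ∀ w, g w ≠ top → w ∈ W) :
    (∀ w, truthψ A w) ↔ ∀ w ∈ W, evalB (g w) A := by
  simp only [← hg]
  refine forall_iff_forall_mem_of_forall_notMem fun w hw => ?_
  rwa [not_not.mp (mt (hW w) hw)]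

theorem universal_grounding_fold_general
    {Struct Term Vy : Type} (compl : Set Struct)
    (top : Term)
    (evalB : Term → Struct → Prop)
    (htop : ∀ A', evalB top A')
    (truthψ : Struct → Vy → Prop)              -- meaning of ψ at (v, w), v fixed
    (g : Vy → Term)
    (hg : ∀ w, ∀ A' ∈ compl, (evalB (g w) A' ↔ truthψ A' w))  -- g(v,w) grounds ψ
    (W : Finset Vy)
    (hW : ∀ w, g w ≠ top → w ∈ W)              -- W contains every w with grounding ≠ ⊤
    (foldConj : Finset Vy → Term)
    (hfold : ∀ (S : Finset Vy) A', (evalB (foldConj S) A' ↔ ∀ w ∈ S, evalB (g w) A')) :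
    (W = ∅ → ∀ A' ∈ compl, (evalB top A' ↔ ∀ w, truthψ A' w)) ∧
    (∀ A' ∈ compl, (evalB (foldConj W) A' ↔ ∀ w, truthψ A' w)) := by
  have key : ∀ A' ∈ compl, (∀ w, truthψ A' w) ↔ ∀ w ∈ W, evalB (g w) A' := fun A' hA' =>
    forall_truth_iff_forall_mem_eval_grounding (htop A') (fun w => hg w A' hA') hW
  refine ⟨?_, fun A' hA' => by rw [hfold, key A' hA']⟩
  rintro rfl A' hA'
  simp [htop, key A' hA']

/-- case analysis underlying rule 1.8 (left): the ⊓-fold of the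
groundings of ψ over W_v (empty fold = ⊤) is always a grounding of ∀ ȳ ψ at v. -/
theorem universal_grounding_fold
    {Struct Term Vy : Type} (compl : Set Struct)
    (top : Term)
    (evalB : Term → Struct → Prop)
    (htop : ∀ A', evalB top A')
    (truthψ : Struct → Vy → Prop)              -- meaning of ψ at (v, w), v fixed
    (g : Vy → Term)
    (hg : ∀ w, ∀ A' ∈ compl, (evalB (g w) A' ↔ truthψ A' w))  -- g(v,w) grounds ψ
    (W : Finset Vy)
    (hW : ∀ w, g w ≠ top → w ∈ W)              -- W contains every w with grounding ≠ ⊤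
    (foldConj : Finset Vy → Term)
    (hfold : ∀ (S : Finset Vy) A', (evalB (foldConj S) A' ↔ ∀ w ∈ S, evalB (g w) A'))
    (hfold_empty : foldConj ∅ = top) :
    (W = ∅ → ∀ A' ∈ compl, (evalB top A' ↔ ∀ w, truthψ A' w)) ∧
    (∀ A' ∈ compl, (evalB (foldConj W) A' ↔ ∀ w, truthψ A' w)) :=
  universal_grounding_fold_general compl top evalB htop truthψ g hg W hW foldConj hfold
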